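/- arXiv:1208.4458 — 3 statements merged into one kernel-verified Lean document; each statement's English description precedes it below -/
import Mathlib

section
/- Let (R, m, k) be a commutative noetherian local ring and \(\chi: X \to Y\) an R-linear map of R-modules. If \(\operatorname{Coker}(\chi)\) has a non-zero free direct summand, then \(\operatorname{Ker}(\chi^*) \not\subseteq m\, Y^*\), where \((-)^* = \operatorname{Hom}_R(-, R)\). -/
open IsLocalRing

/-! A non-zero free summand of `Coker χ` carries a coordinate functional, which extends to
`f : (Coker χ)*` with `f c = 1`. Pulled back to `Y`, `f` lies in `Ker χ*` and takes the value `1`,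
whereas every element of `m Y*` takes all its values in `m`. -/

/-- A module has a non-zero free direct summand if it decomposes as an internal direct
sum of two submodules, one of which is non-zero and free. -/
def HasNonzeroFreeDirectSummand (R M : Type) [Ring R] [AddCommGroup M] [Module R M] : Prop :=
  ∃ (A B : Submodule R M), IsCompl A B ∧ A ≠ ⊥ ∧ Module.Free R A

theorem Module.Free.exists_dual_apply_eq_one {R M : Type*} [Semiring R] [AddCommMonoid M]
    [Module R M] [Module.Free R M] [Nontrivial M] : ∃ (f : Module.Dual R M) (x : M), f x = 1 := by
  let b := Module.Free.chooseBasis R M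
  obtain ⟨i⟩ := b.index_nonempty
  exact ⟨b.coord i, b i, by simp⟩

theorem HasNonzeroFreeDirectSummand.exists_dual_apply_eq_one {R M : Type} [Ring R]
    [AddCommGroup M] [Module R M] (h : HasNonzeroFreeDirectSummand R M) :
    ∃ (f : Module.Dual R M) (x : M), f x = 1 := by
  obtain ⟨A, B, hAB, hA, _⟩ := h
  have : Nontrivial A := Submodule.nontrivial_iff_ne_bot.mpr hA
  obtain ⟨f, a, hfa⟩ := Module.Free.exists_dual_apply_eq_one (R := R) (M := A)
  refine ⟨f ∘ₗ A.projectionOnto B hAB, a, ?_⟩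
  rwa [LinearMap.comp_apply, Submodule.projectionOnto_apply_left]

theorem Module.Dual.apply_mem_of_mem_smul_top {R M : Type*} [CommSemiring R] [AddCommMonoid M]
    [Module R M] {I : Ideal R} {f : Module.Dual R M}
    (hf : f ∈ I • (⊤ : Submodule R (Module.Dual R M))) (x : M) : f x ∈ I := by
  have : I • ⊤ ≤ Submodule.comap (LinearMap.applyₗ x : Module.Dual R M →ₗ[R] R) I :=
    Submodule.smul_le.mpr fun r hr g _ ↦ by simpa using I.mul_mem_right (g x) hr
  exact this hf

theorem ker_dualMap_not_le_of_coker_free_summand_general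
    (R : Type) [CommRing R] [IsLocalRing R]
    (X Y : Type) [AddCommGroup X] [Module R X] [AddCommGroup Y] [Module R Y]
    (χ : X →ₗ[R] Y)
    (h : HasNonzeroFreeDirectSummand R (Y ⧸ LinearMap.range χ)) :
    ¬ (LinearMap.ker χ.dualMap ≤
        maximalIdeal R • (⊤ : Submodule R (Module.Dual R Y))) := by
  obtain ⟨f, c, hfc⟩ := h.exists_dual_apply_eq_one
  obtain ⟨y, rfl⟩ := (LinearMap.range χ).mkQ_surjective c
  have hker : f ∘ₗ (LinearMap.range χ).mkQ ∈ LinearMap.ker χ.dualMap := by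
    rw [LinearMap.mem_ker, LinearMap.dualMap_apply', LinearMap.comp_assoc, LinearMap.range_mkQ_comp,
      LinearMap.comp_zero]
  intro hle
  have hunit : (1 : R) ∈ maximalIdeal R :=
    hfc ▸ Module.Dual.apply_mem_of_mem_smul_top (hle hker) y
  exact (maximalIdeal.isMaximal R).ne_top ((Ideal.eq_top_iff_one _).mpr hunit)

/-- If `χ : X → Y` is `R`-linear over a commutative noetherian local ring `(R, m, k)` and
`Coker χ` has a non-zero free direct summand, then `Ker (χ*) ⊄ m Y*`. -/
theorem ker_dualMap_not_le_of_coker_free_summand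
    (R : Type) [CommRing R] [IsLocalRing R] [IsNoetherianRing R]
    (X Y : Type) [AddCommGroup X] [Module R X] [AddCommGroup Y] [Module R Y]
    (χ : X →ₗ[R] Y)
    (h : HasNonzeroFreeDirectSummand R (Y ⧸ LinearMap.range χ)) :
    ¬ (LinearMap.ker χ.dualMap ≤
        maximalIdeal R • (⊤ : Submodule R (Module.Dual R Y))) :=
  ker_dualMap_not_le_of_coker_free_summand_general R X Y χ h
end

section
/- Let (R, m, k) be a commutative noetherian local ring, \(\chi: X \to Y\) an R-linear map with Y a finite free R-module. If \(\operatorname{Ker}(\chi^*) \not\subseteq m\, Y^*\), then \(\operatorname{Coker}(\chi)\) has a non-zero free direct summand. -/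
open IsLocalRing

/-! A functional `f` in `Ker χ*` outside `m Y*` has a coefficient that is a unit in the dual
basis, so it maps `Y` onto `R`; it vanishes on `Im χ`, hence induces a surjection
`Coker χ → R`, which splits because `R` is free. -/

open LinearMap

theorem LinearMap.isCompl_range_ker_of_comp_eq_id {R M P : Type*} [Ring R] [AddCommGroup M]
    [Module R M] [AddCommGroup P] [Module R P] {s : P →ₗ[R] M} {g : M →ₗ[R] P}
    (hgs : g ∘ₗ s = id) : IsCompl (range s) (ker g) := by
  have hsg : IsIdempotentElem (s ∘ₗ g) := by
    rw [IsIdempotentElem, Module.End.mul_eq_comp, comp_assoc, ← comp_assoc g, hgs,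
      id_comp]
  simpa only [range_comp_of_range_eq_top s (range_eq_top.2 (surjective_of_comp_eq_id s g hgs)),
    ker_comp_of_ker_eq_bot g (ker_eq_bot.2 (injective_of_comp_eq_id s g hgs))] using hsg.isCompl

theorem hasNonzeroFreeDirectSummand_of_surjective {R M P : Type} [Ring R] [AddCommGroup M]
    [Module R M] [AddCommGroup P] [Module R P] [Module.Free R P] [Nontrivial P]
    (g : M →ₗ[R] P) (hg : Function.Surjective g) : HasNonzeroFreeDirectSummand R M := by
  obtain ⟨s, hgs⟩ := g.exists_rightInverse_of_surjective (range_eq_top.2 hg)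
  have hs : Function.Injective s := injective_of_comp_eq_id s g hgs
  refine ⟨range s, ker g, isCompl_range_ker_of_comp_eq_id hgs, ?_,
    .of_equiv (LinearEquiv.ofInjective s hs)⟩
  rw [Ne, range_eq_bot, ← ker_eq_top, ker_eq_bot.2 hs]
  exact bot_ne_top

theorem Module.Dual.mem_smul_top_of_range_le {R Y : Type*} [CommRing R] [AddCommGroup Y]
    [Module R Y] [Module.Free R Y] [Module.Finite R Y] {I : Ideal R} {f : Module.Dual R Y}
    (hf : range f ≤ I) : f ∈ I • (⊤ : Submodule R (Module.Dual R Y)) := by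
  let b := Module.Free.chooseBasis R Y
  rw [← b.dualBasis.sum_repr f]
  exact Submodule.sum_mem _ fun i _ ↦ Submodule.smul_mem_smul (hf ⟨b i, by
    rw [b.dualBasis_repr]⟩) trivial

theorem Module.Dual.surjective_of_notMem_maximalIdeal_smul_top {R Y : Type*} [CommRing R]
    [IsLocalRing R] [AddCommGroup Y] [Module R Y] [Module.Free R Y] [Module.Finite R Y]
    {f : Module.Dual R Y} (hf : f ∉ maximalIdeal R • (⊤ : Submodule R (Module.Dual R Y))) :
    Function.Surjective f := by
  rw [← range_eq_top]
  by_contra hne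
  exact hf (mem_smul_top_of_range_le (le_maximalIdeal hne))

theorem range_le_ker_of_mem_ker_dualMap {R X Y : Type*} [CommRing R] [AddCommGroup X]
    [Module R X] [AddCommGroup Y] [Module R Y] {χ : X →ₗ[R] Y} {f : Module.Dual R Y}
    (hf : f ∈ ker χ.dualMap) : range χ ≤ ker f := fun _ hy ↦ by
  rw [ker_dualMap_eq_dualAnnihilator_range, Submodule.mem_dualAnnihilator] at hf
  exact hf _ hy

theorem coker_has_free_summand_of_ker_dualMap_not_le_general
    (R : Type) [CommRing R] [IsLocalRing R]
    (X Y : Type) [AddCommGroup X] [Module R X] [AddCommGroup Y] [Module R Y]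
    [Module.Finite R Y] [Module.Free R Y]
    (χ : X →ₗ[R] Y)
    (h : ¬ (LinearMap.ker χ.dualMap ≤
        maximalIdeal R • (⊤ : Submodule R (Module.Dual R Y)))) :
    HasNonzeroFreeDirectSummand R (Y ⧸ LinearMap.range χ) := by
  obtain ⟨f, hfker, hfm⟩ := SetLike.not_le_iff_exists.1 h
  refine hasNonzeroFreeDirectSummand_of_surjective
    ((range χ).liftQ f (range_le_ker_of_mem_ker_dualMap hfker)) ?_
  rw [← range_eq_top, Submodule.range_liftQ, range_eq_top]
  exact Module.Dual.surjective_of_notMem_maximalIdeal_smul_top hfm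

/-- If `χ : X → Y` is `R`-linear over a commutative noetherian local ring `(R, m, k)`, `Y`
is finite free, and `Ker (χ*) ⊄ m Y*`, then `Coker χ` has a non-zero free direct summand. -/
theorem coker_has_free_summand_of_ker_dualMap_not_le
    (R : Type) [CommRing R] [IsLocalRing R] [IsNoetherianRing R]
    (X Y : Type) [AddCommGroup X] [Module R X] [AddCommGroup Y] [Module R Y]
    [Module.Finite R Y] [Module.Free R Y]
    (χ : X →ₗ[R] Y)
    (h : ¬ (LinearMap.ker χ.dualMap ≤
        maximalIdeal R • (⊤ : Submodule R (Module.Dual R Y)))) :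
    HasNonzeroFreeDirectSummand R (Y ⧸ LinearMap.range χ) :=
  coker_has_free_summand_of_ker_dualMap_not_le_general R X Y χ h
end

section
/- Let (S, m_S, k) and (T, m_T, k) be singular commutative noetherian local rings, N a finite S-module and P a finite T-module of finite projective dimension over S and T respectively, with \(N/m_S N \cong V \cong P/m_T P\) for a k-vector space V of dimension v. Set \(R = S \times_k T\) and \(M = N \times_V P\). Then as R-modules, \(m_R M \cong m_S N \oplus m_T P\), where \(m_R = m_S \oplus m_T\). -/
open CategoryTheory IsLocalRing

/-- An object of `ModuleCat R` has finite projective dimension if it admits a projective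
resolution that vanishes in all sufficiently high degrees. -/
def HasFiniteProjectiveDimension {R : Type} [Ring R] (M : ModuleCat R) : Prop :=
  ∃ (n : ℕ) (P : CategoryTheory.ProjectiveResolution M),
    ∀ i, n < i → CategoryTheory.Limits.IsZero (P.complex.X i)

/-- A noetherian local ring is regular if its maximal ideal can be generated by
`dim R` elements. -/
def IsRegularLocal (R : Type) [CommRing R] [IsLocalRing R] : Prop :=
  ∃ s : Finset R, Ideal.span (s : Set R) = IsLocalRing.maximalIdeal R ∧
    (s.card : WithBot ℕ∞) = ringKrullDim R

/-!
The inclusion `m_R M ⊆ m_S N × m_T P` is immediate. Conversely, for `s ∈ m_S` the pair `(s, 0)`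
lies in `m_R` and kills `P`, so `(s • n, 0) = (s, 0) • (n, p) ∈ m_R M` for any `p` with
`(n, p) ∈ M`, which exists because `πP` is onto; symmetrically `0 × m_T P ⊆ m_R M`.
-/

namespace Submodule

variable {R S N P : Type*} [CommSemiring R] [Semiring S]
  [AddCommMonoid N] [AddCommMonoid P] [Module R N] [Module R P]
  {I : Ideal R} {M : Submodule R (N × P)} {J : Ideal S}

theorem mk_zero_mem_smul_of_lifts [Module S N] (hM : ∀ n, ∃ p, (n, p) ∈ M)
    (hJ : ∀ s ∈ J, ∃ a ∈ I, (∀ n : N, a • n = s • n) ∧ ∀ p : P, a • p = 0)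
    {n : N} (hn : n ∈ J • (⊤ : Submodule S N)) : (n, (0 : P)) ∈ I • M := by
  refine smul_induction_on (p := fun n => (n, (0 : P)) ∈ I • M) hn ?_ ?_
  · intro s hs n _
    obtain ⟨a, haI, haN, haP⟩ := hJ s hs
    obtain ⟨p, hp⟩ := hM n
    simpa [haN, haP] using smul_mem_smul haI hp
  · intro x y hx hy
    simpa using add_mem hx hy

theorem zero_mk_mem_smul_of_lifts [Module S P]
    (hM : ∀ p, ∃ n, (n, p) ∈ M)
    (hJ : ∀ s ∈ J, ∃ a ∈ I, (∀ p : P, a • p = s • p) ∧ ∀ n : N, a • n = 0)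
    {p : P} (hp : p ∈ J • (⊤ : Submodule S P)) : ((0 : N), p) ∈ I • M := by
  have hswap : (p, (0 : N)) ∈ I • M.map (LinearEquiv.prodComm R N P).toLinearMap :=
    mk_zero_mem_smul_of_lifts
      (fun p => (hM p).imp fun n hn => mem_map_of_mem hn) hJ hp
  rw [← map_smul''] at hswap
  obtain ⟨x, hx, hxp⟩ := hswap
  obtain rfl : x = (0, p) := Prod.ext (congrArg Prod.snd hxp) (congrArg Prod.fst hxp)
  exact hx

end Submodule

theorem fiber_product_module_max_submodule_general
    (S T k : Type) [CommRing S] [CommRing T] [Field k]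
    [IsLocalRing S] [IsLocalRing T]
    (εS : S →+* k) (εT : T →+* k)
    (hkS : RingHom.ker εS = maximalIdeal S) (hkT : RingHom.ker εT = maximalIdeal T)
    (R : Subring (S × T)) (hR : ∀ x : S × T, x ∈ R ↔ εS x.1 = εT x.2)
    (N : Type) [AddCommGroup N] [Module S N]
    (P : Type) [AddCommGroup P] [Module T P]
    (V : Type) [AddCommGroup V] [Module k V]
    (πN : N →+ V) (πP : P →+ V)
    (hπN : Function.Surjective πN) (hπP : Function.Surjective πP) :
    letI : Module R N := Module.compHom N ((RingHom.fst S T).comp R.subtype)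
    letI : Module R P := Module.compHom P ((RingHom.snd S T).comp R.subtype)
    ∀ (M M' : Submodule R (N × P)) (I : Ideal R),
      (∀ x : N × P, x ∈ M ↔ πN x.1 = πP x.2) →
      (∀ x : N × P, x ∈ M' ↔
        x.1 ∈ maximalIdeal S • (⊤ : Submodule S N) ∧
        x.2 ∈ maximalIdeal T • (⊤ : Submodule T P)) →
      (∀ x : R, x ∈ I ↔
        ((x : S × T).1 ∈ maximalIdeal S ∧ (x : S × T).2 ∈ maximalIdeal T)) →
      Nonempty (↥(I • M) ≃ₗ[R] ↥M') := by
  let _ : Module R N := Module.compHom N ((RingHom.fst S T).comp R.subtype)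
  let _ : Module R P := Module.compHom P ((RingHom.snd S T).comp R.subtype)
  intro M M' I hM hM' hI
  have hliftS : ∀ s ∈ maximalIdeal S, ∃ a ∈ I, (∀ n : N, a • n = s • n) ∧ ∀ p : P, a • p = 0 := by
    intro s hs
    have hsR : (s, (0 : T)) ∈ R := by
      rw [hR, map_zero, ← RingHom.mem_ker, hkS]; exact hs
    exact ⟨⟨_, hsR⟩, (hI _).2 ⟨hs, zero_mem _⟩, fun _ => rfl, fun p => zero_smul T p⟩
  have hliftT : ∀ t ∈ maximalIdeal T, ∃ a ∈ I, (∀ p : P, a • p = t • p) ∧ ∀ n : N, a • n = 0 := by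
    intro t ht
    have htR : ((0 : S), t) ∈ R := by
      rw [hR, map_zero, eq_comm, ← RingHom.mem_ker, hkT]; exact ht
    exact ⟨⟨_, htR⟩, (hI _).2 ⟨zero_mem _, ht⟩, fun _ => rfl, fun n => zero_smul S n⟩
  have hfst : ∀ n, ∃ p, (n, p) ∈ M := fun n => (hπP (πN n)).imp fun p hp => (hM _).2 hp.symm
  have hsnd : ∀ p, ∃ n, (n, p) ∈ M := fun p => (hπN (πP p)).imp fun n hn => (hM _).2 hn
  refine ⟨LinearEquiv.ofEq _ _ (le_antisymm ?_ ?_)⟩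
  · refine Submodule.smul_le.2 fun a ha m _ => (hM' _).2 ?_
    exact ⟨Submodule.smul_mem_smul ((hI a).1 ha).1 trivial,
      Submodule.smul_mem_smul ((hI a).1 ha).2 trivial⟩
  · rintro ⟨n, p⟩ hnp
    obtain ⟨hn, hp⟩ := (hM' _).1 hnp
    simpa using add_mem (Submodule.mk_zero_mem_smul_of_lifts hfst hliftS hn)
      (Submodule.zero_mk_mem_smul_of_lifts hsnd hliftT hp)

/-- Let `S`, `T` be singular noetherian local rings with common residue field `k`,
`N` a finite `S`-module and `P` a finite `T`-module of finite projective dimension, with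
`N/m_S N ≅ V ≅ P/m_T P`.  Over the fiber product `R = S ×_k T` (with maximal ideal
`m_R = m_S ⊕ m_T`), the fiber product module `M = N ×_V P` satisfies
`m_R M ≅ m_S N ⊕ m_T P` as `R`-modules. -/
theorem fiber_product_module_max_submodule
    (S T k : Type) [CommRing S] [CommRing T] [Field k]
    [IsLocalRing S] [IsLocalRing T] [IsNoetherianRing S] [IsNoetherianRing T]
    (hSsing : ¬ IsRegularLocal S) (hTsing : ¬ IsRegularLocal T)
    (εS : S →+* k) (εT : T →+* k)
    (hεS : Function.Surjective εS) (hεT : Function.Surjective εT)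
    (hkS : RingHom.ker εS = maximalIdeal S) (hkT : RingHom.ker εT = maximalIdeal T)
    (R : Subring (S × T)) (hR : ∀ x : S × T, x ∈ R ↔ εS x.1 = εT x.2)
    (N : Type) [AddCommGroup N] [Module S N] [Module.Finite S N]
    (P : Type) [AddCommGroup P] [Module T P] [Module.Finite T P]
    (hpdN : HasFiniteProjectiveDimension (ModuleCat.of S N))
    (hpdP : HasFiniteProjectiveDimension (ModuleCat.of T P))
    (V : Type) [AddCommGroup V] [Module k V] (v : ℕ) (hv : Module.finrank k V = v)
    (πN : N →+ V) (πP : P →+ V)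
    (hπN : Function.Surjective πN) (hπP : Function.Surjective πP)
    (hkerN : ∀ x : N, πN x = 0 ↔ x ∈ maximalIdeal S • (⊤ : Submodule S N))
    (hkerP : ∀ x : P, πP x = 0 ↔ x ∈ maximalIdeal T • (⊤ : Submodule T P))
    (hsemiN : ∀ (s : S) (x : N), πN (s • x) = εS s • πN x)
    (hsemiP : ∀ (t : T) (x : P), πP (t • x) = εT t • πP x) :
    letI : Module R N := Module.compHom N ((RingHom.fst S T).comp R.subtype)
    letI : Module R P := Module.compHom P ((RingHom.snd S T).comp R.subtype)
    ∀ (M M' : Submodule R (N × P)) (I : Ideal R),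
      (∀ x : N × P, x ∈ M ↔ πN x.1 = πP x.2) →
      (∀ x : N × P, x ∈ M' ↔
        x.1 ∈ maximalIdeal S • (⊤ : Submodule S N) ∧
        x.2 ∈ maximalIdeal T • (⊤ : Submodule T P)) →
      (∀ x : R, x ∈ I ↔
        ((x : S × T).1 ∈ maximalIdeal S ∧ (x : S × T).2 ∈ maximalIdeal T)) →
      Nonempty (↥(I • M) ≃ₗ[R] ↥M') :=
  fiber_product_module_max_submodule_general S T k εS εT hkS hkT R hR N P V πN πP hπN hπP
end
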